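/- arXiv:2604.22587 — 2 statements merged into one kernel-verified Lean document; each statement's English description precedes it below -/
import Mathlib

section
/- Let f : ℝ → ℝ be twice continuously differentiable with f(0) = 0, f'(0) = 0, and f'(γ) → 0 as γ → +∞. If f is not identically zero on [0, +∞), then there exist real numbers 0 ≤ γ₁ < γ₂ and γ_h with (γ₁ + γ₂)/2 < γ_h such that f(γ_h) < (f(γ₁) + f(γ₂))/2. -/
open Filter

theorem stmt_9 (f : ℝ → ℝ) (hf : ContDiff ℝ 2 f)
    (h0 : f 0 = 0) (h0' : deriv f 0 = 0)
    (hlim : Tendsto (deriv f) atTop (nhds 0))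
    (hne : ¬ ∀ γ : ℝ, 0 ≤ γ → f γ = 0) :
    ∃ γ₁ γ₂ γh : ℝ, 0 ≤ γ₁ ∧ γ₁ < γ₂ ∧ (γ₁ + γ₂) / 2 < γh ∧
      f γh < (f γ₁ + f γ₂) / 2 := by
  by_contra hcon
  push_neg at hcon
  -- hcon : ∀ γ₁ γ₂ γh, 0 ≤ γ₁ → γ₁ < γ₂ → (γ₁+γ₂)/2 < γh → (f γ₁ + f γ₂)/2 ≤ f γh
  apply hne
  have hcont : Continuous f := hf.continuous
  -- monotonicity on [0,∞)
  have hmono : ∀ x y : ℝ, 0 ≤ x → x < y → f x ≤ f y := by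
    intro x y hx hxy
    have := hcon x y y hx hxy (by linarith)
    linarith
  have hnonneg : ∀ y : ℝ, 0 ≤ y → 0 ≤ f y := by
    intro y hy
    rcases eq_or_lt_of_le hy with h | h
    · rw [← h, h0]
    · have := hmono 0 y le_rfl h
      linarith [this, h0.le]
  -- doubling inequality
  have hhalf : ∀ y : ℝ, 0 < y → f y ≤ 2 * f (y / 2) := by
    intro y hy
    have key : ∀ᶠ z in nhdsWithin (y / 2) (Set.Ioi (y / 2)), f y / 2 ≤ f z := by
      filter_upwards [self_mem_nhdsWithin] with z hz
      have := hcon 0 y z le_rfl hy (by rw [Set.mem_Ioi] at hz; linarith)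
      rw [h0] at this
      linarith
    have htend : Tendsto f (nhdsWithin (y / 2) (Set.Ioi (y / 2))) (nhds (f (y / 2))) :=
      (hcont.continuousAt).continuousWithinAt.tendsto
    have := ge_of_tendsto htend key
    linarith
  -- iterated
  have hiter : ∀ n : ℕ, ∀ y : ℝ, 0 < y → f y ≤ 2 ^ n * f (y / 2 ^ n) := by
    intro n
    induction n with
    | zero => intro y hy; simp
    | succ n ih =>
      intro y hy
      have h1 := ih y hy
      have h2 := hhalf (y / 2 ^ n) (by positivity)
      have : y / 2 ^ n / 2 = y / 2 ^ (n + 1) := by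
        rw [div_div]; ring_nf
      rw [this] at h2
      have h2n : (0:ℝ) < 2 ^ n := by positivity
      calc f y ≤ 2 ^ n * f (y / 2 ^ n) := h1
        _ ≤ 2 ^ n * (2 * f (y / 2 ^ (n + 1))) := by
            exact mul_le_mul_of_nonneg_left h2 h2n.le
        _ = 2 ^ (n + 1) * f (y / 2 ^ (n + 1)) := by ring
  -- slope bound near 0
  have hderiv0 : HasDerivAt f 0 0 := by
    have := (hf.differentiable (by norm_num)).differentiableAt (x := 0)
    simpa [h0'] using this.hasDerivAt
  have hslope : Tendsto (fun t : ℝ => f t / t) (nhdsWithin 0 (Set.Ioi 0)) (nhds 0) := by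
    have := hasDerivAt_iff_tendsto_slope.mp hderiv0
    have h2 : Tendsto (slope f 0) (nhdsWithin 0 (Set.Ioi 0)) (nhds 0) :=
      this.mono_left (nhdsWithin_mono 0 (fun t ht => by
        simp only [Set.mem_compl_iff, Set.mem_singleton_iff]
        exact ne_of_gt ht))
    refine h2.congr' ?_
    filter_upwards [self_mem_nhdsWithin] with t ht
    simp [slope, h0, div_eq_inv_mul]
  -- conclude f y = 0 for y ≥ 0
  intro y hy
  rcases eq_or_lt_of_le hy with h | h
  · rw [← h, h0]
  refine le_antisymm ?_ (hnonneg y hy)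
  -- show f y ≤ ε * y for all ε > 0
  have hle : ∀ ε : ℝ, 0 < ε → f y ≤ ε * y := by
    intro ε hε
    have : ∀ᶠ t in nhdsWithin 0 (Set.Ioi 0), f t / t < ε :=
      hslope.eventually (Filter.Tendsto.eventually_lt_const hε tendsto_id) |>.mono (fun t ht => ht)
    rw [eventually_nhdsWithin_iff] at this
    rcases Metric.eventually_nhds_iff.mp this with ⟨δ, hδ, hδ'⟩
    obtain ⟨n, hn⟩ := pow_unbounded_of_one_lt (y / δ) (by norm_num : (1:ℝ) < 2)
    have hyn : y / 2 ^ n < δ := by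
      rw [div_lt_iff₀ (by positivity : (0:ℝ) < 2 ^ n)]
      have := (div_lt_iff₀ hδ).mp hn
      linarith [mul_comm δ ((2:ℝ) ^ n)]
    have h2n : (0:ℝ) < 2 ^ n := by positivity
    have htpos : 0 < y / 2 ^ n := by positivity
    have hsmall : f (y / 2 ^ n) / (y / 2 ^ n) < ε := by
      apply hδ'
      · rw [Real.dist_eq, sub_zero, abs_of_pos htpos]; exact hyn
      · exact htpos
    have hsmall' : f (y / 2 ^ n) ≤ ε * (y / 2 ^ n) := by
      rw [div_lt_iff₀ htpos] at hsmall
      linarith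
    calc f y ≤ 2 ^ n * f (y / 2 ^ n) := hiter n y h
      _ ≤ 2 ^ n * (ε * (y / 2 ^ n)) := mul_le_mul_of_nonneg_left hsmall' h2n.le
      _ = ε * y := by field_simp
  by_contra hpos
  push_neg at hpos
  have h2 := hle (f y / (2 * y)) (by positivity)
  have heq : f y / (2 * y) * y = f y / 2 := by field_simp
  linarith
end

section
/- Let N ≥ 1 be an integer, σ > 0, P_T > 0, h ≥ 0, and let X₁, …, X_{2N} be independent real Gaussian random variables, each with mean 0 and variance σ²/2, on a probability space (Ω, μ). Set G := Σ_{i=1}^{2N} X_i². Then for every r with 0 ≤ r ≤ log₂(1 + P_T h²), μ[ log₂( (1 + P_T h²)/(1 + P_T G) ) < r ] = 1 − (1/(N−1)!) · Γ_i( N, 1/(2^r P_T σ²) + h²/(2^r σ²) − 1/(P_T σ²) ); and for every r > log₂(1 + P_T h²), μ[ log₂( (1 + P_T h²)/(1 + P_T G) ) < r ] = 1. Here Γ_i(s, x) := ∫₀ˣ t^{s−1} e^{−t} dt is the lower incomplete gamma function. -/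
open MeasureTheory ProbabilityTheory Real
open scoped NNReal ENNReal

/-- The lower incomplete gamma function `Γ_i(s, x) = ∫₀ˣ t^(s-1) e^(-t) dt`. -/
noncomputable def incGamma (s x : ℝ) : ℝ := ∫ t in (0 : ℝ)..x, t ^ (s - 1) * Real.exp (-t)



lemma incGamma_nat_eq {N : ℕ} (hN : 1 ≤ N) (x : ℝ) :
    incGamma N x = ∫ t in (0:ℝ)..x, t ^ (N - 1) * Real.exp (-t) := by
  unfold incGamma
  have : ((N : ℝ) - 1) = ((N - 1 : ℕ) : ℝ) := by
    rw [Nat.cast_sub hN]; simp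
  simp_rw [this, Real.rpow_natCast]

lemma incGamma_nonneg {N : ℕ} {x : ℝ} (hx : 0 ≤ x) : 0 ≤ incGamma N x := by
  apply intervalIntegral.integral_nonneg hx
  intro t ht
  have : (0:ℝ) ≤ t := ht.1
  positivity

lemma subst_lemma {v : ℝ} (hv : 0 < v) {N : ℕ} (hN : 1 ≤ N) (b : ℝ) (hb : 0 ≤ b) :
    ∫ y in (0:ℝ)..b, y ^ (2 * N - 1) * Real.exp (-(y ^ 2 / (2 * v)))
      = v * (2 * v) ^ (N - 1) * incGamma N (b ^ 2 / (2 * v)) := by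
  have h2v : (2 * v) ≠ 0 := by positivity
  set g : ℝ → ℝ := fun t => v * ((2 * v * t) ^ (N - 1) * Real.exp (-t)) with hg
  have hgc : Continuous g := by fun_prop
  have key : ∫ y in (0:ℝ)..b, (y / v) • g (y ^ 2 / (2 * v))
      = ∫ t in ((0:ℝ)^2/(2*v))..(b^2/(2*v)), g t := by
    apply intervalIntegral.integral_comp_smul_deriv (f := fun y => y ^ 2 / (2 * v))
      (f' := fun y => y / v) ?_ (by fun_prop) hgc
    intro x _
    have := (hasDerivAt_pow 2 x).div_const (2 * v)
    refine this.congr_deriv ?_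
    field_simp; ring
  have lhs_eq : ∀ y : ℝ, (y / v) • g (y ^ 2 / (2 * v))
      = y ^ (2 * N - 1) * Real.exp (-(y ^ 2 / (2 * v))) := by
    intro y
    have h1 : 2 * v * (y ^ 2 / (2 * v)) = y ^ 2 := by field_simp
    simp only [hg, smul_eq_mul, h1]
    have h2 : (y ^ 2) ^ (N - 1) = y ^ (2 * N - 2) := by
      rw [← pow_mul]; congr 1; omega
    rw [h2]
    have h3 : y / v * (v * (y ^ (2 * N - 2) * Real.exp (-(y ^ 2 / (2 * v)))))
        = y * y ^ (2 * N - 2) * Real.exp (-(y ^ 2 / (2 * v))) := by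
      field_simp
    rw [h3, ← pow_succ']
    congr 2
    omega
  have rhs_eq : ∫ t in ((0:ℝ)^2/(2*v))..(b^2/(2*v)), g t
      = v * (2 * v) ^ (N - 1) * incGamma N (b ^ 2 / (2 * v)) := by
    rw [incGamma_nat_eq hN]
    rw [show ((0:ℝ)^2/(2*v)) = 0 by simp]
    rw [show (v * (2 * v) ^ (N - 1) * ∫ t in (0:ℝ)..(b^2/(2*v)), t ^ (N-1) * Real.exp (-t))
      = ∫ t in (0:ℝ)..(b^2/(2*v)), (v * (2*v)^(N-1)) * (t ^ (N-1) * Real.exp (-t))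
      from (intervalIntegral.integral_const_mul _ _).symm]
    apply intervalIntegral.integral_congr
    intro t _
    simp only [hg]; ring
  rw [← rhs_eq, ← key]
  exact intervalIntegral.integral_congr (fun y _ => (lhs_eq y).symm)


lemma pi_gauss_eq (n : ℕ) (v : ℝ≥0) (hv : v ≠ 0) :
    Measure.pi (fun _ : Fin n => gaussianReal 0 v) =
      (volume : Measure (Fin n → ℝ)).withDensity
        (fun x => ENNReal.ofReal (∏ i, gaussianPDFReal 0 v (x i))) := by
  apply Measure.pi_eq
  intro s hs
  rw [withDensity_apply _ (MeasurableSet.univ_pi hs)]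
  have hind : ∀ x : Fin n → ℝ,
      (Set.univ.pi s).indicator (fun x => ENNReal.ofReal (∏ i, gaussianPDFReal 0 v (x i))) x
        = ENNReal.ofReal (∏ i, (s i).indicator (gaussianPDFReal 0 v) (x i)) := by
    intro x
    by_cases hx : x ∈ Set.univ.pi s
    · rw [Set.indicator_of_mem hx]
      congr 1
      apply Finset.prod_congr rfl
      intro i _
      rw [Set.indicator_of_mem (hx i (Set.mem_univ i))]
    · rw [Set.indicator_of_notMem hx]
      rw [Set.mem_pi] at hx
      push_neg at hx
      obtain ⟨i, _, hi⟩ := hx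
      have hz : ∏ i, (s i).indicator (gaussianPDFReal 0 v) (x i) = 0 :=
        Finset.prod_eq_zero (Finset.mem_univ i) (by rw [Set.indicator_of_notMem hi])
      rw [hz]
      simp
  rw [← lintegral_indicator (MeasurableSet.univ_pi hs)]
  simp_rw [hind]
  have hint : ∀ i : Fin n, Integrable ((s i).indicator (gaussianPDFReal 0 v)) volume :=
    fun i => (integrable_gaussianPDFReal 0 v).indicator (hs i)
  rw [← ofReal_integral_eq_lintegral_ofReal (μ := volume) (Integrable.fintype_prod hint)]
  · rw [volume_pi, integral_fintype_prod_eq_prod (f := fun i y => (s i).indicator (gaussianPDFReal 0 v) y)]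
    simp_rw [integral_indicator (hs _)]
    rw [ENNReal.ofReal_prod_of_nonneg (fun i _ =>
      setIntegral_nonneg (hs i) (fun y _ => gaussianPDFReal_nonneg 0 v y))]
    exact Finset.prod_congr rfl fun i _ => (gaussianReal_apply_eq_integral 0 hv (s i)).symm
  · apply Filter.Eventually.of_forall
    intro x
    apply Finset.prod_nonneg
    intro i _
    exact Set.indicator_nonneg (fun y _ => gaussianPDFReal_nonneg 0 v y) _


lemma joint_law {Ω : Type*} [MeasurableSpace Ω] (μ : Measure Ω) [IsProbabilityMeasure μ]
    (n : ℕ) (v : ℝ≥0) (X : Fin n → Ω → ℝ) (hXm : ∀ i, Measurable (X i))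
    (hindep : iIndepFun X μ)
    (hgauss : ∀ i, Measure.map (X i) μ = gaussianReal 0 v) :
    Measure.map (fun ω i => X i ω) μ = Measure.pi (fun _ => gaussianReal 0 v) := by
  refine (Measure.pi_eq fun s hs => ?_).symm
  rw [Measure.map_apply (measurable_pi_lambda _ hXm) (MeasurableSet.univ_pi hs)]
  have hpre : (fun ω i => X i ω) ⁻¹' Set.univ.pi s = ⋂ i ∈ Finset.univ, X i ⁻¹' s i := by
    ext ω; simp [Set.mem_pi]
  rw [hpre, hindep.measure_inter_preimage_eq_mul Finset.univ (fun i _ => hs i)]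
  exact Finset.prod_congr rfl fun i _ => by
    rw [← Measure.map_apply (hXm i) (hs i), hgauss i]





lemma chisq_cdf (N : ℕ) (hN : 1 ≤ N) (σ : ℝ) (hσ : 0 < σ) (c : ℝ) (hc : 0 ≤ c) :
    Measure.pi (fun _ : Fin (2*N) => gaussianReal 0 ⟨σ^2/2, by positivity⟩)
        {x | ∑ i, (x i)^2 ≤ c}
      = ENNReal.ofReal ((1 / (N-1).factorial) * incGamma N (c / σ^2)) := by
  set v : ℝ≥0 := ⟨σ^2/2, by positivity⟩ with hvdef
  have hv : v ≠ 0 := by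
    simp only [← NNReal.coe_ne_zero, hvdef, NNReal.coe_mk]
    intro hz; have h' : σ^2/2 = 0 := congrArg Subtype.val hz; have : 0 < σ^2/2 := by positivity
    linarith
  have hvc : (v : ℝ) = σ^2/2 := rfl
  have hvpos : (0:ℝ) < v := by rw [hvc]; positivity
  have h2v : 2 * (v:ℝ) = σ^2 := by rw [hvc]; ring
  have hS : MeasurableSet {x : Fin (2*N) → ℝ | ∑ i, (x i)^2 ≤ c} := by
    apply measurableSet_le _ measurable_const
    exact Finset.univ.measurable_sum fun i _ => (measurable_pi_apply i).pow_const 2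
  rw [pi_gauss_eq _ _ hv, withDensity_apply _ hS]
  rw [← ofReal_integral_eq_lintegral_ofReal (μ := volume.restrict _)
    ((Integrable.fintype_prod (f := fun _ : Fin (2*N) => gaussianPDFReal 0 v)
      fun _ => integrable_gaussianPDFReal 0 v).restrict)
    (Filter.Eventually.of_forall fun x =>
      Finset.prod_nonneg fun i _ => gaussianPDFReal_nonneg 0 v (x i))]
  congr 1
  -- transfer to EuclideanSpace
  rw [← MeasurePreserving.setIntegral_preimage_emb
    (EuclideanSpace.volume_preserving_symm_measurableEquiv_toLp (Fin (2*N)))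
    ((MeasurableEquiv.toLp 2 (Fin (2*N) → ℝ)).symm).measurableEmbedding
    (fun x => ∏ i, gaussianPDFReal 0 v (x i)) _]
  have hnorm : ∀ y : EuclideanSpace ℝ (Fin (2*N)), ‖y‖^2 = ∑ i, (y i)^2 := by
    intro y
    rw [EuclideanSpace.norm_eq, Real.sq_sqrt (Finset.sum_nonneg fun i _ => by positivity)]
    simp [Real.norm_eq_abs, sq_abs]
  have hpre : ((MeasurableEquiv.toLp 2 (Fin (2*N) → ℝ)).symm) ⁻¹'
      {x : Fin (2*N) → ℝ | ∑ i, (x i)^2 ≤ c} = Metric.closedBall 0 (Real.sqrt c) := by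
    ext y
    simp only [Set.mem_preimage, Set.mem_setOf_eq, Metric.mem_closedBall, dist_zero_right]
    have : ((MeasurableEquiv.toLp 2 (Fin (2*N) → ℝ)).symm) y = fun i => y i := rfl
    rw [this]
    constructor
    · intro hsum
      have h1 : ‖y‖^2 ≤ c := by rw [hnorm]; exact hsum
      calc ‖y‖ = Real.sqrt (‖y‖^2) := by rw [Real.sqrt_sq (norm_nonneg y)]
        _ ≤ Real.sqrt c := Real.sqrt_le_sqrt h1
    · intro hle
      have := pow_le_pow_left₀ (norm_nonneg y) hle 2
      rw [Real.sq_sqrt hc, hnorm] at this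
      exact this
  rw [hpre]
  set A : ℝ := (Real.sqrt (2 * π * v))⁻¹ with hA
  have h2piv : 2 * π * (v:ℝ) = π * σ^2 := by rw [hvc]; ring
  have hprod : ∀ y : EuclideanSpace ℝ (Fin (2*N)),
      (∏ i, gaussianPDFReal 0 v (((MeasurableEquiv.toLp 2 (Fin (2*N) → ℝ)).symm) y i))
        = A^(2*N) * Real.exp (-(‖y‖^2/(2*(v:ℝ)))) := by
    intro y
    have hyy : ∀ i, ((MeasurableEquiv.toLp 2 (Fin (2*N) → ℝ)).symm) y i = y i := fun i => rfl
    simp only [gaussianPDFReal, sub_zero, hyy]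
    rw [Finset.prod_mul_distrib, Finset.prod_const, Finset.card_univ, Fintype.card_fin,
      ← Real.exp_sum]
    congr 1
    rw [← Finset.sum_div, Finset.sum_neg_distrib, neg_div, hnorm y]
  rw [← integral_indicator measurableSet_closedBall]
  set f : ℝ → ℝ := Set.indicator (Set.Iic (Real.sqrt c))
    (fun t => A^(2*N) * Real.exp (-(t^2/(2*(v:ℝ))))) with hf
  have hind : ∀ y : EuclideanSpace ℝ (Fin (2*N)),
      (Metric.closedBall (0 : EuclideanSpace ℝ (Fin (2*N))) (Real.sqrt c)).indicator
        (fun y => ∏ i, gaussianPDFReal 0 v (((MeasurableEquiv.toLp 2 (Fin (2*N) → ℝ)).symm) y i)) y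
      = f ‖y‖ := by
    intro y
    by_cases hy : ‖y‖ ≤ Real.sqrt c
    · rw [Set.indicator_of_mem (Metric.mem_closedBall.mpr (by rwa [dist_zero_right])),
        hprod y, hf, Set.indicator_of_mem (Set.mem_Iic.mpr hy)]
    · rw [Set.indicator_of_notMem (by rw [Metric.mem_closedBall, dist_zero_right]; exact hy),
        hf, Set.indicator_of_notMem (by rwa [Set.mem_Iic])]
  simp_rw [hind]
  haveI : NeZero (2*N) := ⟨by omega⟩
  haveI : Nontrivial (EuclideanSpace ℝ (Fin (2*N))) := by
    apply Module.nontrivial_of_finrank_pos (R := ℝ)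
    rw [finrank_euclideanSpace, Fintype.card_fin]
    omega
  rw [integral_fun_norm_addHaar volume f, finrank_euclideanSpace, Fintype.card_fin]
  have hball : ((volume : Measure (EuclideanSpace ℝ (Fin (2*N)))) (Metric.ball 0 1)).toReal
      = π^N / N.factorial := by
    rw [EuclideanSpace.volume_ball, Fintype.card_fin]
    rw [ENNReal.ofReal_one, one_pow, one_mul, ENNReal.toReal_ofReal (by positivity)]
    have h1 : ((2*N : ℕ) : ℝ) / 2 + 1 = (N : ℝ) + 1 := by push_cast; ring
    rw [h1, Real.Gamma_nat_eq_factorial]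
    congr 1
    rw [pow_mul, Real.sq_sqrt Real.pi_nonneg]
  rw [measureReal_def, hball]
  have hIoi : ∫ y in Set.Ioi (0:ℝ), y ^ (2*N-1) • f y
      = A^(2*N) * ((v:ℝ) * (σ^2)^(N-1) * incGamma N (c/σ^2)) := by
    have hptw : ∀ y : ℝ, y^(2*N-1) • f y = Set.indicator (Set.Iic (Real.sqrt c))
        (fun t => A^(2*N) * (t^(2*N-1) * Real.exp (-(t^2/(2*(v:ℝ)))))) y := by
      intro y
      by_cases hy : y ∈ Set.Iic (Real.sqrt c)
      · rw [Set.indicator_of_mem hy, hf, Set.indicator_of_mem hy, smul_eq_mul]; ring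
      · rw [Set.indicator_of_notMem hy, hf, Set.indicator_of_notMem hy, smul_eq_mul, mul_zero]
    simp_rw [hptw]
    rw [setIntegral_indicator measurableSet_Iic, Set.Ioi_inter_Iic,
      ← intervalIntegral.integral_of_le (Real.sqrt_nonneg c),
      intervalIntegral.integral_const_mul, subst_lemma hvpos hN _ (Real.sqrt_nonneg c),
      Real.sq_sqrt hc, h2v]
  rw [hIoi]
  have hA2 : A^(2*N) = ((π * σ^2)^N)⁻¹ := by
    have h1 : A^2 = (π * σ^2)⁻¹ := by
      rw [hA, inv_pow, Real.sq_sqrt (by positivity), h2piv]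
    rw [pow_mul, h1, ← inv_pow]
  rw [hA2, nsmul_eq_mul, smul_eq_mul, hvc]
  have hfac : (N.factorial : ℝ) = N * (N-1).factorial := by
    rw [← Nat.mul_factorial_pred (by omega : N ≠ 0)]
    push_cast
    ring
  have hpow : (π * σ^2)^N = π^N * (σ^2 * (σ^2)^(N-1)) := by
    rw [mul_pow]
    congr 1
    rw [← pow_succ']
    congr 1
    omega
  rw [hfac, hpow]
  have h1 : (π:ℝ)^N ≠ 0 := by positivity
  have h2 : ((σ:ℝ)^2)^(N-1) ≠ 0 := by positivity
  have h3 : ((N-1).factorial : ℝ) ≠ 0 := Nat.cast_ne_zero.mpr (Nat.factorial_ne_zero _)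
  have h4 : (N:ℝ) ≠ 0 := Nat.cast_ne_zero.mpr (by omega)
  push_cast
  field_simp



theorem stmt_12 {Ω : Type*} [MeasurableSpace Ω] (μ : Measure Ω) [IsProbabilityMeasure μ]
    (N : ℕ) (hN : 1 ≤ N) (σ P_T h : ℝ) (hσ : 0 < σ) (hP : 0 < P_T) (hh : 0 ≤ h)
    (X : Fin (2 * N) → Ω → ℝ) (hXm : ∀ i, Measurable (X i))
    (hindep : iIndepFun X μ)
    (hgauss : ∀ i, Measure.map (X i) μ = gaussianReal 0 ⟨σ ^ 2 / 2, by positivity⟩) :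
    (∀ r : ℝ, 0 ≤ r → r ≤ logb 2 (1 + P_T * h ^ 2) →
      (μ {ω | logb 2 ((1 + P_T * h ^ 2) / (1 + P_T * ∑ i, (X i ω) ^ 2)) < r}).toReal
        = 1 - (1 / (N - 1).factorial) *
            incGamma N (1 / (2 ^ r * P_T * σ ^ 2) + h ^ 2 / (2 ^ r * σ ^ 2)
              - 1 / (P_T * σ ^ 2))) ∧
    (∀ r : ℝ, logb 2 (1 + P_T * h ^ 2) < r →
      (μ {ω | logb 2 ((1 + P_T * h ^ 2) / (1 + P_T * ∑ i, (X i ω) ^ 2)) < r}).toReal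
        = 1) := by
  have hG_meas : Measurable fun ω => ∑ i, (X i ω)^2 :=
    Finset.univ.measurable_sum fun i _ => ((hXm i).pow_const 2)
  have hGnonneg : ∀ ω, (0:ℝ) ≤ ∑ i, (X i ω)^2 :=
    fun ω => Finset.sum_nonneg fun i _ => sq_nonneg _
  have hA : (0:ℝ) < 1 + P_T * h^2 := by positivity
  constructor
  · intro r hr0 hrle
    have h2r : (0:ℝ) < 2^r := Real.rpow_pos_of_pos two_pos r
    set c : ℝ := ((1 + P_T * h^2) / 2^r - 1)/P_T with hc
    have h2rA : (2:ℝ)^r ≤ 1 + P_T * h^2 := by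
      calc (2:ℝ)^r ≤ 2^(logb 2 (1 + P_T * h^2)) :=
            Real.rpow_le_rpow_of_exponent_le one_le_two hrle
        _ = 1 + P_T * h^2 := Real.rpow_logb two_pos (by norm_num) hA
    have hcnn : 0 ≤ c := by
      apply div_nonneg _ hP.le
      rw [sub_nonneg, le_div_iff₀ h2r, one_mul]
      exact h2rA
    have hset : {ω | logb 2 ((1 + P_T * h^2) / (1 + P_T * ∑ i, (X i ω)^2)) < r}
        = {ω | c < ∑ i, (X i ω)^2} := by
      ext ω
      have hg := hGnonneg ω
      have hd : (0:ℝ) < 1 + P_T * ∑ i, (X i ω)^2 := by positivity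
      simp only [Set.mem_setOf_eq]
      rw [Real.logb_lt_iff_lt_rpow one_lt_two (by positivity), div_lt_iff₀ hd, hc,
        div_lt_iff₀ hP, sub_lt_iff_lt_add, div_lt_iff₀ h2r]
      constructor
      · intro H
        calc 1 + P_T * h^2 < 2^r * (1 + P_T * ∑ i, (X i ω)^2) := H
          _ = ((∑ i, (X i ω)^2) * P_T + 1) * 2^r := by ring
      · intro H
        calc 1 + P_T * h^2 < ((∑ i, (X i ω)^2) * P_T + 1) * 2^r := H
          _ = 2^r * (1 + P_T * ∑ i, (X i ω)^2) := by ring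
    rw [hset]
    have hcompl : {ω | c < ∑ i, (X i ω)^2} = {ω | ∑ i, (X i ω)^2 ≤ c}ᶜ := by
      ext ω; simp [not_le]
    have hmeasle : MeasurableSet {ω | ∑ i, (X i ω)^2 ≤ c} :=
      measurableSet_le hG_meas measurable_const
    have hSmeas : MeasurableSet {x : Fin (2*N) → ℝ | ∑ i, (x i)^2 ≤ c} := by
      apply measurableSet_le _ measurable_const
      exact Finset.univ.measurable_sum fun i _ => (measurable_pi_apply i).pow_const 2
    have hmain : μ {ω | ∑ i, (X i ω)^2 ≤ c}
        = ENNReal.ofReal ((1/((N-1).factorial : ℝ)) * incGamma N (c/σ^2)) := by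
      have hjm : μ {ω | ∑ i, (X i ω)^2 ≤ c}
          = Measure.map (fun ω i => X i ω) μ {x | ∑ i, (x i)^2 ≤ c} := by
        rw [Measure.map_apply (measurable_pi_lambda _ hXm) hSmeas]
        rfl
      rw [hjm, joint_law μ (2*N) _ X hXm hindep hgauss, chisq_cdf N hN σ hσ c hcnn]
    rw [hcompl, measure_compl hmeasle (measure_ne_top μ _), measure_univ, hmain]
    have hq_nonneg : (0:ℝ) ≤ (1/((N-1).factorial : ℝ)) * incGamma N (c/σ^2) :=
      mul_nonneg (by positivity) (incGamma_nonneg (div_nonneg hcnn (sq_nonneg σ)))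
    have hle1 : ENNReal.ofReal ((1/((N-1).factorial : ℝ)) * incGamma N (c/σ^2)) ≤ 1 := by
      rw [← hmain]; exact prob_le_one
    rw [ENNReal.toReal_sub_of_le hle1 ENNReal.one_ne_top, ENNReal.toReal_one,
      ENNReal.toReal_ofReal hq_nonneg]
    have harg : c/σ^2 = 1/(2^r*P_T*σ^2) + h^2/(2^r*σ^2) - 1/(P_T*σ^2) := by
      rw [hc]
      field_simp
    rw [harg]
  · intro r hr
    have huniv : {ω | logb 2 ((1 + P_T * h^2) / (1 + P_T * ∑ i, (X i ω)^2)) < r}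
        = Set.univ := by
      ext ω
      simp only [Set.mem_setOf_eq, Set.mem_univ, iff_true]
      have hg := hGnonneg ω
      have hd : (0:ℝ) < 1 + P_T * ∑ i, (X i ω)^2 := by positivity
      calc logb 2 ((1 + P_T * h^2) / (1 + P_T * ∑ i, (X i ω)^2)) ≤ logb 2 (1 + P_T * h^2) := by
            apply (Real.logb_le_logb one_lt_two (by positivity) hA).mpr
            apply div_le_self hA.le
            nlinarith
        _ < r := hr
    rw [huniv, measure_univ, ENNReal.toReal_one]
end
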